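/- Let r > 0 and let H be a complex Hilbert space of holomorphic functions on the disc D_r = {z ∈ ℂ : |z| < r} containing all complex polynomials, such that a holomorphic function h on D_r belongs to H if and only if zh belongs to H, and such that the operator M_z of multiplication by z is bounded on H. Let f, g ∈ H with M_z* g = 0, f(0) ≠ 0 and ⟨f,g⟩ ≠ 0. If there exists h0 ∈ H whose Taylor coefficients at 0 are given by ĥ0(j) = ∑_{i=0}^j f̂(j−i)/⟨f,g⟩^i for all j ≥ 0 (where f̂(n) is the n-th Taylor coefficient of f at 0), then (M_z + f⊗g) h0 = ⟨f,g⟩ h0 and ⟨f,g⟩ is a simple eigenvalue of M_z + f⊗g, i.e., an eigenvalue whose eigenspace is one-dimensional. -/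

import Mathlib

open scoped InnerProductSpace

/-- The rank one operator `f ⊗ g` given by `(f ⊗ g) h = ⟨h, g⟩ f`, where the inner
product is linear in the first argument (i.e. `⟪g, h⟫_ℂ • f` in Mathlib's convention). -/
noncomputable def rankOne {H : Type*} [NormedAddCommGroup H] [InnerProductSpace ℂ H]
    (f g : H) : H →L[ℂ] H := (innerSL ℂ g).smulRight f

/-- The `n`-th Taylor coefficient at `0` of a function `φ : ℂ → ℂ`. -/
noncomputable def taylorCoeff (φ : ℂ → ℂ) (n : ℕ) : ℂ :=
  iteratedDeriv n φ 0 / (n.factorial : ℂ)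

/-- A realization of a complex Hilbert space `H` as a Hilbert space of holomorphic
functions on the disc `D_r = {z : |z| < r}` containing all complex polynomials, such
that a holomorphic function `h` on `D_r` belongs to `H` iff `z·h` does, and the
operator `M_z` of multiplication by `z` is a bounded operator on `H`. -/
structure HolomorphicHilbertSpaceOn (r : ℝ) (H : Type*) [NormedAddCommGroup H]
    [InnerProductSpace ℂ H] [CompleteSpace H] where
  rpos : 0 < r
  toFun : H →ₗ[ℂ] (ℂ → ℂ)
  holo : ∀ h : H, DifferentiableOn ℂ (toFun h) (Metric.ball (0 : ℂ) r)
  sep : ∀ h₁ h₂ : H, Set.EqOn (toFun h₁) (toFun h₂) (Metric.ball (0 : ℂ) r) → h₁ = h₂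
  Mz : H →L[ℂ] H
  Mz_apply : ∀ h : H, ∀ z ∈ Metric.ball (0 : ℂ) r, toFun (Mz h) z = z * toFun h z
  shift_mem : ∀ φ : ℂ → ℂ, DifferentiableOn ℂ φ (Metric.ball (0 : ℂ) r) →
    ((∃ h : H, Set.EqOn (toFun h) φ (Metric.ball (0 : ℂ) r)) ↔
      (∃ h : H, Set.EqOn (toFun h) (fun z => z * φ z) (Metric.ball (0 : ℂ) r)))
  poly_mem : ∀ p : Polynomial ℂ, ∃ h : H,
    Set.EqOn (toFun h) (fun z => Polynomial.eval z p) (Metric.ball (0 : ℂ) r)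

/-!
Write `λ = ⟨f, g⟩`. Multiplication by `z` shifts Taylor coefficients, and Taylor coefficients at
`0` determine an element of `H`, so the recursion `ĥ₀(j + 1) = ĥ₀(j) / λ + f̂(j + 1)` encoded
by the hypothesis says exactly `M_z h₀ = λ (h₀ - f)`. Pairing with `g` and using `M_z* g = 0`
gives `⟨h₀, g⟩ = λ`, hence `(M_z + f ⊗ g) h₀ = λ h₀`, and `h₀ ≠ 0` because `ĥ₀(0) = f(0)`.
By the same shift, `M_z - λ` is injective for `λ ≠ 0`; so for any eigenvector `k` the vector
`⟨h₀, g⟩ k - ⟨k, g⟩ h₀`, which `M_z - λ` annihilates, vanishes, and the eigenspace is `ℂ h₀`.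
-/

open Topology Metric

lemma taylorCoeff_eq_of_hasSum {φ : ℂ → ℂ} {c : ℕ → ℂ}
    (h : ∀ᶠ z in 𝓝 0, HasSum (fun n => c n * z ^ n) (φ z)) : taylorCoeff φ = c := by
  have hc : HasFPowerSeriesAt φ (FormalMultilinearSeries.ofScalars ℂ c) 0 := by
    rw [hasFPowerSeriesAt_iff]
    filter_upwards [h] with z hz
    simpa [FormalMultilinearSeries.coeff_ofScalars, mul_comm] using hz
  exact FormalMultilinearSeries.ofScalars_series_injective ℂ ℂ
    (hc.analyticAt.hasFPowerSeriesAt.eq_formalMultilinearSeries hc)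

lemma hasSum_taylorCoeff {φ : ℂ → ℂ} {r : ℝ} (hφ : DifferentiableOn ℂ φ (ball 0 r)) {z : ℂ}
    (hz : z ∈ ball 0 r) : HasSum (fun n => taylorCoeff φ n * z ^ n) (φ z) := by
  have hterm : (fun n : ℕ => (n.factorial : ℂ)⁻¹ • (z - 0) ^ n • iteratedDeriv n φ 0) =
      fun n => taylorCoeff φ n * z ^ n := by
    funext n
    simp only [taylorCoeff, sub_zero, smul_eq_mul]
    ring
  exact hterm ▸ Complex.hasSum_taylorSeries_on_ball hφ hz

lemma sum_range_succ_sub_div_pow {K : Type*} [Field K] (a : ℕ → K) (μ : K) (j : ℕ) :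
    ∑ i ∈ Finset.range (j + 1 + 1), a (j + 1 - i) / μ ^ i =
      (∑ i ∈ Finset.range (j + 1), a (j - i) / μ ^ i) / μ + a (j + 1) := by
  rw [Finset.sum_range_succ', Finset.sum_div]
  congr 1
  · exact Finset.sum_congr rfl fun i _ => by rw [Nat.succ_sub_succ, pow_succ, div_div]
  · simp

section RankOne

variable {H : Type*} [NormedAddCommGroup H] [InnerProductSpace ℂ H]

lemma rankOne_apply (f g h : H) : rankOne f g h = ⟪g, h⟫_ℂ • f := rfl

lemma mem_ker_sub_smul_one_iff {T : H →L[ℂ] H} {μ : ℂ} {k : H} :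
    k ∈ LinearMap.ker ((T - μ • (1 : H →L[ℂ] H) : H →L[ℂ] H) : H →ₗ[ℂ] H) ↔ T k = μ • k := by
  simp [sub_eq_zero]

lemma rank_ker_add_rankOne_sub_smul_one_eq_one {A : H →L[ℂ] H} {f g h₀ : H} {μ : ℂ}
    (hA : ∀ k, A k = μ • k → k = 0) (hh₀ : (A + rankOne f g) h₀ = μ • h₀) (hne : h₀ ≠ 0) :
    Module.rank ℂ
      (LinearMap.ker ((A + rankOne f g - μ • (1 : H →L[ℂ] H) : H →L[ℂ] H) : H →ₗ[ℂ] H)) = 1 := by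
  rw [rank_submodule_eq_one_iff]
  refine ⟨h₀, mem_ker_sub_smul_one_iff.mpr hh₀, hne, fun k hk => ?_⟩
  rw [mem_ker_sub_smul_one_iff, add_apply, rankOne_apply] at hk
  rw [add_apply, rankOne_apply] at hh₀
  have hg : ⟪g, h₀⟫_ℂ ≠ 0 := fun h => hne (hA h₀ (by simpa [h] using hh₀))
  have hcomb : ⟪g, h₀⟫_ℂ • k = ⟪g, k⟫_ℂ • h₀ := by
    rw [← sub_eq_zero]
    refine hA _ ?_
    rw [map_sub, map_smul, map_smul, eq_sub_of_add_eq hk, eq_sub_of_add_eq hh₀]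
    simp only [smul_sub, smul_smul, mul_comm]
    abel
  rw [Submodule.mem_span_singleton]
  exact ⟨⟪g, k⟫_ℂ / ⟪g, h₀⟫_ℂ, by rw [div_eq_inv_mul, mul_smul, ← hcomb, inv_smul_smul₀ hg]⟩

end RankOne

namespace HolomorphicHilbertSpaceOn

variable {r : ℝ} {H : Type*} [NormedAddCommGroup H] [InnerProductSpace ℂ H] [CompleteSpace H]
  (e : HolomorphicHilbertSpaceOn r H)

lemma hasSum_taylorCoeff (h : H) {z : ℂ} (hz : z ∈ ball 0 r) :
    HasSum (fun n => taylorCoeff (e.toFun h) n * z ^ n) (e.toFun h z) :=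
  _root_.hasSum_taylorCoeff (e.holo h) hz

noncomputable def coeff (n : ℕ) : H →ₗ[ℂ] ℂ where
  toFun h := taylorCoeff (e.toFun h) n
  map_add' h k := by
    refine congrFun (taylorCoeff_eq_of_hasSum
      (c := fun n => taylorCoeff (e.toFun h) n + taylorCoeff (e.toFun k) n) ?_) n
    filter_upwards [isOpen_ball.mem_nhds (mem_ball_self e.rpos)] with z hz
    simpa [add_mul] using (e.hasSum_taylorCoeff h hz).add (e.hasSum_taylorCoeff k hz)
  map_smul' a h := by
    refine congrFun (taylorCoeff_eq_of_hasSum (c := fun n => a * taylorCoeff (e.toFun h) n) ?_) n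
    filter_upwards [isOpen_ball.mem_nhds (mem_ball_self e.rpos)] with z hz
    simpa [mul_assoc] using (e.hasSum_taylorCoeff h hz).mul_left a

lemma coeff_apply (n : ℕ) (h : H) : e.coeff n h = taylorCoeff (e.toFun h) n := rfl

lemma ext_coeff {h k : H} (hhk : ∀ n, e.coeff n h = e.coeff n k) : h = k := by
  refine e.sep h k fun z hz => (e.hasSum_taylorCoeff h hz).unique ?_
  simpa only [← coeff_apply, hhk] using e.hasSum_taylorCoeff k hz

lemma coeff_zero (h : H) : e.coeff 0 h = e.toFun h 0 := by
  simp [coeff_apply, taylorCoeff]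

lemma coeff_Mz_zero (h : H) : e.coeff 0 (e.Mz h) = 0 := by
  rw [coeff_zero, e.Mz_apply h 0 (mem_ball_self e.rpos), zero_mul]

lemma coeff_Mz_succ (h : H) (n : ℕ) : e.coeff (n + 1) (e.Mz h) = e.coeff n h := by
  let c : ℕ → ℂ := fun m => match m with
    | 0 => 0
    | m + 1 => e.coeff m h
  refine congrFun (taylorCoeff_eq_of_hasSum (c := c) ?_) (n + 1)
  filter_upwards [isOpen_ball.mem_nhds (mem_ball_self e.rpos)] with z hz
  have hshift : (fun m => c (m + 1) * z ^ (m + 1)) = fun m => z * (e.coeff m h * z ^ m) := by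
    funext m
    ring
  rw [e.Mz_apply h z hz, ← hasSum_nat_add_iff' 1, hshift]
  simp only [Finset.sum_range_one, c, zero_mul, sub_zero]
  exact (e.hasSum_taylorCoeff h hz).mul_left z

lemma eq_zero_of_Mz_eq_smul {μ : ℂ} (hμ : μ ≠ 0) {k : H} (hk : e.Mz k = μ • k) : k = 0 := by
  have hcoeff : ∀ n, e.coeff n k = 0 := by
    intro n
    induction n with
    | zero =>
      have h0 := e.coeff_Mz_zero k
      rw [hk, map_smul, smul_eq_mul] at h0
      exact (mul_eq_zero.mp h0).resolve_left hμ
    | succ n ih =>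
      have hsucc := e.coeff_Mz_succ k n
      rw [hk, map_smul, smul_eq_mul, ih] at hsucc
      exact (mul_eq_zero.mp hsucc).resolve_left hμ
  exact e.ext_coeff fun n => by rw [hcoeff, map_zero]

lemma Mz_eq_smul_sub_of_coeff {μ : ℂ} (hμ : μ ≠ 0) {f h₀ : H}
    (hh₀ : ∀ j, e.coeff j h₀ = ∑ i ∈ Finset.range (j + 1), e.coeff (j - i) f / μ ^ i) :
    e.Mz h₀ = μ • (h₀ - f) := by
  refine e.ext_coeff fun n => ?_
  rw [map_smul, map_sub, smul_eq_mul]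
  cases n with
  | zero => simp [coeff_Mz_zero, hh₀ 0]
  | succ m =>
    have hrec : e.coeff (m + 1) h₀ = e.coeff m h₀ / μ + e.coeff (m + 1) f := by
      rw [hh₀, hh₀]
      exact sum_range_succ_sub_div_pow (fun n => e.coeff n f) μ m
    rw [coeff_Mz_succ, hrec]
    field_simp
    ring

end HolomorphicHilbertSpaceOn

theorem simple_eigenvalue_rankOne_perturbation
    {r : ℝ} {H : Type*} [NormedAddCommGroup H] [InnerProductSpace ℂ H] [CompleteSpace H]
    (e : HolomorphicHilbertSpaceOn r H) (f g : H)
    (hg : ContinuousLinearMap.adjoint e.Mz g = 0)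
    (hf0 : e.toFun f 0 ≠ 0) (hfg : ⟪g, f⟫_ℂ ≠ 0)
    (h0 : H)
    (hh0 : ∀ j : ℕ, taylorCoeff (e.toFun h0) j =
      ∑ i ∈ Finset.range (j + 1), taylorCoeff (e.toFun f) (j - i) / ⟪g, f⟫_ℂ ^ i) :
    (e.Mz + rankOne f g) h0 = ⟪g, f⟫_ℂ • h0 ∧
    h0 ≠ 0 ∧
    Module.rank ℂ
      (LinearMap.ker ((e.Mz + rankOne f g - ⟪g, f⟫_ℂ • (1 : H →L[ℂ] H) : H →L[ℂ] H) : H →ₗ[ℂ] H)) = 1 := by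
  have hMz : e.Mz h0 = ⟪g, f⟫_ℂ • (h0 - f) := e.Mz_eq_smul_sub_of_coeff hfg hh0
  have hgh0 : ⟪g, h0⟫_ℂ = ⟪g, f⟫_ℂ := by
    have hgMz : ⟪g, e.Mz h0⟫_ℂ = 0 := by
      rw [← ContinuousLinearMap.adjoint_inner_left, hg, inner_zero_left]
    rw [hMz, inner_smul_right, inner_sub_right] at hgMz
    exact sub_eq_zero.mp ((mul_eq_zero.mp hgMz).resolve_left hfg)
  have heig : (e.Mz + rankOne f g) h0 = ⟪g, f⟫_ℂ • h0 := by
    rw [add_apply, rankOne_apply, hMz, hgh0, smul_sub, sub_add_cancel]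
  have hne : h0 ≠ 0 := by
    have hcoeff0 : e.coeff 0 h0 = e.coeff 0 f := by simpa [e.coeff_apply] using hh0 0
    rintro rfl
    rw [map_zero, e.coeff_zero] at hcoeff0
    exact hf0 hcoeff0.symm
  exact ⟨heig, hne, rank_ker_add_rankOne_sub_smul_one_eq_one
    (fun _ => e.eq_zero_of_Mz_eq_smul hfg) heig hne⟩
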